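/- arXiv:0907.0776 — 7 statements merged into one kernel-verified Lean document; each statement's English description precedes it below -/
import Mathlib

section
/- Let L be a self-dual lattice of rank n and v ∈ L a primitive vector. Let L(v) = {x ∈ L : ⟨x,v⟩ = 0}. Then the quotient L(v)*/L(v) is isomorphic to Z/(‖v‖² Z). -/
/-!
Self-duality and primitivity give `u ∈ L` with `⟪u, v⟫ = 1`: the pairings `⟪x, v⟫` (`x ∈ L`) form a
subgroup `gℤ` of `ℤ`, and for a prime `p ∣ g` the vector `v / p` pairs integrally with `L`, hence
lies in `L* = L`. Then `L = L(v) + ℤu`, so every `x ∈ L(v)*` satisfies `x - ⟪x, u⟫ v ∈ L`, whence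
`‖v‖² ⟪x, u⟫ ∈ ℤ`. Consequently `L(v)*/L(v)` is cyclic, generated by `w = u - v / ‖v‖²`, and
`k w ∈ L(v)` exactly when `‖v‖² ∣ k`.
-/

open scoped InnerProductSpace

variable {E : Type*} [NormedAddCommGroup E] [InnerProductSpace ℝ E]

def latticeDual (L : AddSubgroup E) : AddSubgroup E where
  carrier := {x | ∀ y ∈ L, ∃ k : ℤ, ⟪x, y⟫_ℝ = k}
  zero_mem' _ _ := ⟨0, by simp⟩
  add_mem' {x x'} hx hx' y hy := by
    obtain ⟨k, hk⟩ := hx y hy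
    obtain ⟨k', hk'⟩ := hx' y hy
    exact ⟨k + k', by rw [inner_add_left, hk, hk', Int.cast_add]⟩
  neg_mem' {x} hx y hy := by
    obtain ⟨k, hk⟩ := hx y hy
    exact ⟨-k, by rw [inner_neg_left, hk, Int.cast_neg]⟩

variable {L : AddSubgroup E} {u v x : E}

theorem mem_orthogonal_singleton_toAddSubgroup : x ∈ (ℝ ∙ v)ᗮ.toAddSubgroup ↔ ⟪x, v⟫_ℝ = 0 :=
  Submodule.mem_orthogonal_singleton_iff_inner_left

theorem inv_natCast_smul_mem_of_dvd (hL : latticeDual L ≤ L) {p : ℕ} (hp : p ≠ 0)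
    (hdvd : ∀ y ∈ L, ∃ j : ℤ, ⟪v, y⟫_ℝ = j * p) : (p : ℝ)⁻¹ • v ∈ L := by
  refine hL fun y hy => ?_
  obtain ⟨j, hj⟩ := hdvd y hy
  refine ⟨j, ?_⟩
  rw [real_inner_smul_left, hj]
  field_simp

theorem exists_inner_eq_one_of_primitive (hL : latticeDual L = L) (hv : v ∈ L)
    (hprim : ∀ d : ℕ, 1 < d → ∀ w ∈ L, (d : ℝ) • w ≠ v) : ∃ u ∈ L, ⟪u, v⟫_ℝ = 1 := by
  let H : AddSubgroup ℤ := (L.map (innerₛₗ ℝ v).toAddMonoidHom).comap (Int.castAddHom ℝ)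
  have mem_H (k : ℤ) : k ∈ H ↔ ∃ y ∈ L, ⟪v, y⟫_ℝ = k := by simp [H]
  obtain ⟨g, hg⟩ := Int.subgroup_cyclic H
  rw [← AddSubgroup.zmultiples_eq_closure] at hg
  have hg_unit : IsUnit g := by
    rw [Int.isUnit_iff_natAbs_eq]
    by_contra hne
    obtain ⟨p, hp, hpg⟩ := Nat.exists_prime_and_dvd hne
    have hdvd : ∀ y ∈ L, ∃ j : ℤ, ⟪v, y⟫_ℝ = j * p := by
      intro y hy
      obtain ⟨k, hk⟩ := (hL.ge hv) y hy
      have hgk : g ∣ k := Int.mem_zmultiples_iff.1 (hg ▸ (mem_H k).2 ⟨y, hy, hk⟩)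
      obtain ⟨j, rfl⟩ := (Int.ofNat_dvd_left.2 hpg).trans hgk
      exact ⟨j, by rw [hk]; push_cast; ring⟩
    exact hprim p hp.one_lt _ (inv_natCast_smul_mem_of_dvd hL.le hp.ne_zero hdvd)
      (smul_inv_smul₀ (Nat.cast_ne_zero.2 hp.ne_zero) v)
  obtain ⟨u, hu, hvu⟩ := (mem_H 1).1 (hg ▸ Int.mem_zmultiples_iff.2 hg_unit.dvd)
  exact ⟨u, hu, by rw [real_inner_comm, hvu, Int.cast_one]⟩

theorem exists_sub_zsmul_mem_inf_orthogonal (hL : L ≤ latticeDual L) (hv : v ∈ L) (hu : u ∈ L)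
    (huv : ⟪u, v⟫_ℝ = 1) {y : E} (hy : y ∈ L) :
    ∃ k : ℤ, ⟪y, v⟫_ℝ = k ∧ y - k • u ∈ L ⊓ (ℝ ∙ v)ᗮ.toAddSubgroup := by
  obtain ⟨k, hk⟩ := hL hy v hv
  refine ⟨k, hk, AddSubgroup.mem_inf.2 ⟨L.sub_mem hy (L.zsmul_mem hu k), ?_⟩⟩
  rw [mem_orthogonal_singleton_toAddSubgroup, ← Int.cast_smul_eq_zsmul ℝ, inner_sub_left,
    real_inner_smul_left, hk, huv, mul_one, sub_self]

theorem sub_inner_smul_mem (hL : latticeDual L = L) (hv : v ∈ L) (hu : u ∈ L)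
    (huv : ⟪u, v⟫_ℝ = 1) (hx : x ∈ latticeDual (L ⊓ (ℝ ∙ v)ᗮ.toAddSubgroup)) :
    x - ⟪x, u⟫_ℝ • v ∈ L := by
  refine hL.le fun y hy => ?_
  obtain ⟨k, hk, hyk⟩ := exists_sub_zsmul_mem_inf_orthogonal hL.ge hv hu huv hy
  obtain ⟨j, hj⟩ := hx _ hyk
  refine ⟨j, ?_⟩
  rw [← Int.cast_smul_eq_zsmul ℝ, inner_sub_right, real_inner_smul_right] at hj
  rw [inner_sub_left, real_inner_smul_left, ← real_inner_comm v y, hk, ← hj]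
  ring

theorem exists_inner_self_mul_inner_eq_intCast (hL : latticeDual L = L) (hv : v ∈ L) (hu : u ∈ L)
    (huv : ⟪u, v⟫_ℝ = 1)
    (hx : x ∈ latticeDual (L ⊓ (ℝ ∙ v)ᗮ.toAddSubgroup) ⊓ (ℝ ∙ v)ᗮ.toAddSubgroup) :
    ∃ k : ℤ, ⟪v, v⟫_ℝ * ⟪x, u⟫_ℝ = k := by
  obtain ⟨hx, hxv⟩ := AddSubgroup.mem_inf.1 hx
  rw [mem_orthogonal_singleton_toAddSubgroup] at hxv
  obtain ⟨k, hk⟩ := hL.ge (sub_inner_smul_mem hL hv hu huv hx) v hv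
  rw [inner_sub_left, real_inner_smul_left, hxv] at hk
  exact ⟨-k, by push_cast; linarith⟩

theorem sub_inv_inner_self_smul_mem (hL : L ≤ latticeDual L) (hu : u ∈ L) (huv : ⟪u, v⟫_ℝ = 1) :
    u - (⟪v, v⟫_ℝ)⁻¹ • v ∈
      latticeDual (L ⊓ (ℝ ∙ v)ᗮ.toAddSubgroup) ⊓ (ℝ ∙ v)ᗮ.toAddSubgroup := by
  have hv0 : v ≠ 0 := by rintro rfl; simp at huv
  refine AddSubgroup.mem_inf.2 ⟨fun y hy => ?_, ?_⟩
  · obtain ⟨hy, hyv⟩ := AddSubgroup.mem_inf.1 hy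
    obtain ⟨k, hk⟩ := hL hu y hy
    rw [mem_orthogonal_singleton_toAddSubgroup, real_inner_comm] at hyv
    exact ⟨k, by rw [inner_sub_left, real_inner_smul_left, hk, hyv, mul_zero, sub_zero]⟩
  · rw [mem_orthogonal_singleton_toAddSubgroup, inner_sub_left, real_inner_smul_left, huv,
      inv_mul_cancel₀ (inner_self_ne_zero.2 hv0), sub_self]

theorem exists_sub_zsmul_mem (hL : latticeDual L = L) (hv : v ∈ L) (hu : u ∈ L)
    (huv : ⟪u, v⟫_ℝ = 1)
    (hx : x ∈ latticeDual (L ⊓ (ℝ ∙ v)ᗮ.toAddSubgroup) ⊓ (ℝ ∙ v)ᗮ.toAddSubgroup) :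
    ∃ k : ℤ, x - k • (u - (⟪v, v⟫_ℝ)⁻¹ • v) ∈ L ⊓ (ℝ ∙ v)ᗮ.toAddSubgroup := by
  have hv0 : ⟪v, v⟫_ℝ ≠ 0 := inner_self_ne_zero.2 (by rintro rfl; simp at huv)
  have hw := sub_inv_inner_self_smul_mem hL.ge hu huv
  obtain ⟨c, hc⟩ := exists_inner_self_mul_inner_eq_intCast hL hv hu huv hx
  have hcv : (c : ℝ) * (⟪v, v⟫_ℝ)⁻¹ = ⟪x, u⟫_ℝ := by rw [← hc]; field_simp
  have hsplit : x - (-c) • (u - (⟪v, v⟫_ℝ)⁻¹ • v) = (x - ⟪x, u⟫_ℝ • v) + c • u := by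
    rw [← Int.cast_smul_eq_zsmul ℝ, ← Int.cast_smul_eq_zsmul ℝ, ← hcv]
    push_cast
    module
  refine ⟨-c, AddSubgroup.mem_inf.2 ⟨?_, sub_mem (AddSubgroup.mem_inf.1 hx).2
    (zsmul_mem (AddSubgroup.mem_inf.1 hw).2 _)⟩⟩
  rw [hsplit]
  exact add_mem (sub_inner_smul_mem hL hv hu huv (AddSubgroup.mem_inf.1 hx).1) (zsmul_mem hu c)

theorem zsmul_mem_iff_dvd (hL : L ≤ latticeDual L) (hv : v ∈ L) (hu : u ∈ L)
    (huv : ⟪u, v⟫_ℝ = 1) {m : ℤ} (hm : ⟪v, v⟫_ℝ = m) (k : ℤ) :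
    k • (u - (⟪v, v⟫_ℝ)⁻¹ • v) ∈ L ⊓ (ℝ ∙ v)ᗮ.toAddSubgroup ↔ m ∣ k := by
  have hm0 : (m : ℝ) ≠ 0 := hm ▸ inner_self_ne_zero.2 (by rintro rfl; simp at huv)
  have hw := AddSubgroup.mem_inf.1 (sub_inv_inner_self_smul_mem hL hu huv)
  rw [AddSubgroup.mem_inf, and_iff_left (zsmul_mem hw.2 k), hm]
  constructor
  · intro hkL
    obtain ⟨i, hi⟩ := hL hu u hu
    obtain ⟨j, hj⟩ := hL hkL u hu
    rw [← Int.cast_smul_eq_zsmul ℝ, real_inner_smul_left, inner_sub_left, real_inner_smul_left,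
      real_inner_comm u v, huv, hi] at hj
    refine ⟨k * i - j, ?_⟩
    have hk : (k : ℝ) = m * (k * i - j) := by
      rw [← hj]
      field_simp
      ring
    exact_mod_cast hk
  · rintro ⟨j, rfl⟩
    have hsplit : (m * j) • (u - (m : ℝ)⁻¹ • v) = (m * j) • u - j • v := by
      simp only [← Int.cast_smul_eq_zsmul ℝ, smul_sub, smul_smul]
      push_cast
      rw [mul_comm (m : ℝ), mul_assoc, mul_inv_cancel₀ hm0, mul_one]
    rw [hsplit]
    exact sub_mem (zsmul_mem hu _) (zsmul_mem hv _)

theorem nonempty_quotient_addEquiv_zmod (hL : latticeDual L = L) (hv : v ∈ L) (hu : u ∈ L)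
    (huv : ⟪u, v⟫_ℝ = 1) {Lv LvStar : AddSubgroup E} (hLv : Lv = L ⊓ (ℝ ∙ v)ᗮ.toAddSubgroup)
    (hLvStar : LvStar = latticeDual Lv ⊓ (ℝ ∙ v)ᗮ.toAddSubgroup) {m : ℕ} (hm : ⟪v, v⟫_ℝ = m) :
    Nonempty ((LvStar ⧸ Lv.addSubgroupOf LvStar) ≃+ ZMod m) := by
  subst hLv hLvStar
  set Lv : AddSubgroup E := L ⊓ (ℝ ∙ v)ᗮ.toAddSubgroup
  set LvStar : AddSubgroup E := latticeDual Lv ⊓ (ℝ ∙ v)ᗮ.toAddSubgroup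
  let w : LvStar := ⟨_, sub_inv_inner_self_smul_mem hL.ge hu huv⟩
  let f : ℤ →+ LvStar ⧸ Lv.addSubgroupOf LvStar := zmultiplesHom _ (w : LvStar ⧸ _)
  have hf (k : ℤ) : f k = (k • w : LvStar) := rfl
  have hsurj : Function.Surjective f := by
    intro q
    obtain ⟨x, rfl⟩ := QuotientAddGroup.mk_surjective q
    obtain ⟨k, hk⟩ := exists_sub_zsmul_mem hL hv hu huv x.2
    refine ⟨k, ?_⟩
    rw [hf, QuotientAddGroup.eq, AddSubgroup.mem_addSubgroupOf, AddSubgroup.coe_add,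
      AddSubgroup.coe_neg, AddSubgroup.coe_zsmul, neg_add_eq_sub]
    exact hk
  have hker : f.ker = AddSubgroup.zmultiples (m : ℤ) := by
    ext k
    rw [AddMonoidHom.mem_ker, hf, QuotientAddGroup.eq_zero_iff, AddSubgroup.mem_addSubgroupOf,
      Int.mem_zmultiples_iff, AddSubgroup.coe_zsmul]
    exact zsmul_mem_iff_dvd hL.ge hv hu huv (by exact_mod_cast hm) k
  exact ⟨(QuotientAddGroup.quotientKerEquivOfSurjective f hsurj).symm.trans
    ((QuotientAddGroup.quotientAddEquivOfEq hker).trans (Int.quotientZMultiplesNatEquivZMod m))⟩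

theorem stmt_2_general (n : ℕ)
    (L : AddSubgroup (EuclideanSpace ℝ (Fin n)))
    (hselfdual : (L : Set (EuclideanSpace ℝ (Fin n))) =
      {x | ∀ y ∈ L, ∃ m : ℤ, ⟪x, y⟫_ℝ = (m : ℝ)})
    (v : EuclideanSpace ℝ (Fin n)) (hv : v ∈ L)
    (hprim : ∀ d : ℕ, 1 < d → ∀ w ∈ L, (d : ℝ) • w ≠ v)
    (Lv LvStar : AddSubgroup (EuclideanSpace ℝ (Fin n)))
    (hLv : (Lv : Set (EuclideanSpace ℝ (Fin n))) = {x | x ∈ L ∧ ⟪x, v⟫_ℝ = 0})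
    (hLvStar : (LvStar : Set (EuclideanSpace ℝ (Fin n))) =
      {x | ⟪x, v⟫_ℝ = 0 ∧ ∀ y ∈ Lv, ∃ m : ℤ, ⟪x, y⟫_ℝ = (m : ℝ)})
    (m : ℕ) (hm : ⟪v, v⟫_ℝ = (m : ℝ)) :
    Nonempty ((LvStar ⧸ Lv.addSubgroupOf LvStar) ≃+ ZMod m) := by
  have hL : latticeDual L = L := SetLike.coe_injective hselfdual.symm
  have hLv' : Lv = L ⊓ (ℝ ∙ v)ᗮ.toAddSubgroup := by
    ext x
    rw [← SetLike.mem_coe, hLv, AddSubgroup.mem_inf, mem_orthogonal_singleton_toAddSubgroup]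
    rfl
  have hLvStar' : LvStar = latticeDual Lv ⊓ (ℝ ∙ v)ᗮ.toAddSubgroup := by
    ext x
    rw [← SetLike.mem_coe, hLvStar, AddSubgroup.mem_inf, mem_orthogonal_singleton_toAddSubgroup,
      and_comm]
    rfl
  obtain ⟨u, hu, huv⟩ := exists_inner_eq_one_of_primitive hL hv hprim
  exact nonempty_quotient_addEquiv_zmod hL hv hu huv hLv' hLvStar' hm

/-- If `L` is a self-dual lattice of rank `n` and `v ∈ L` is primitive,
and `L(v)` is the sublattice of vectors orthogonal to `v`, then
`L(v)*/L(v) ≅ ℤ/‖v‖²ℤ`, where `L(v)*` is the dual of `L(v)` inside the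
hyperplane `v^⊥`. -/
theorem stmt_2 (n : ℕ) (b : Module.Basis (Fin n) ℝ (EuclideanSpace ℝ (Fin n)))
    (L : AddSubgroup (EuclideanSpace ℝ (Fin n)))
    (hL : (L : Set (EuclideanSpace ℝ (Fin n))) = ↑(Submodule.span ℤ (Set.range ⇑b)))
    (hselfdual : (L : Set (EuclideanSpace ℝ (Fin n))) =
      {x | ∀ y ∈ L, ∃ m : ℤ, ⟪x, y⟫_ℝ = (m : ℝ)})
    (v : EuclideanSpace ℝ (Fin n)) (hv : v ∈ L) (hv0 : v ≠ 0)
    (hprim : ∀ d : ℕ, 1 < d → ∀ w ∈ L, (d : ℝ) • w ≠ v)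
    (Lv LvStar : AddSubgroup (EuclideanSpace ℝ (Fin n)))
    (hLv : (Lv : Set (EuclideanSpace ℝ (Fin n))) = {x | x ∈ L ∧ ⟪x, v⟫_ℝ = 0})
    (hLvStar : (LvStar : Set (EuclideanSpace ℝ (Fin n))) =
      {x | ⟪x, v⟫_ℝ = 0 ∧ ∀ y ∈ Lv, ∃ m : ℤ, ⟪x, y⟫_ℝ = (m : ℝ)})
    (hle : Lv ≤ LvStar)
    (m : ℕ) (hm : ⟪v, v⟫_ℝ = (m : ℝ)) :
    Nonempty ((LvStar ⧸ Lv.addSubgroupOf LvStar) ≃+ ZMod m) :=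
  stmt_2_general n L hselfdual v hv hprim Lv LvStar hLv hLvStar m hm
end

section
/- Let L be a self-dual lattice of rank n with covering radius ρ, and let v ∈ L be a primitive vector. Then the covering radius of the lattice L(v)* = p_v(L) (the orthogonal projection of L onto v^⊥) is at most sqrt(ρ² − 1/(4‖v‖²)). -/
open scoped InnerProductSpace

/-!
Given `x ⊥ v`, cover the shifted point `x + v / (2‖v‖²)` by a lattice vector `w`. Since `L` is
integral, `⟪v, w⟫ = m ∈ ℤ`, so the component of `x + v / (2‖v‖²) - w` along `v` has length
`|1 - 2m| / (2‖v‖) ≥ 1 / (2‖v‖)`. By Pythagoras the remaining component `x - p_v(w)` then has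
squared length at most `ρ² - 1 / (4‖v‖²)`.
-/

variable {E : Type*} [NormedAddCommGroup E] [InnerProductSpace ℝ E]

lemma coe_orthogonalProjectionOnto_orthogonal_span_singleton (v w : E) :
    ((ℝ ∙ v)ᗮ.orthogonalProjectionOnto w : E) = w - (⟪v, w⟫_ℝ / ‖v‖ ^ 2) • v := by
  rw [← Submodule.starProjection_apply, Submodule.starProjection_orthogonal_val,
    Submodule.starProjection_singleton]
  rfl

lemma norm_add_smul_sub_sq_of_mem_orthogonal {v x : E} (hx : x ∈ (ℝ ∙ v)ᗮ) (t : ℝ) (w : E) :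
    ‖x + t • v - w‖ ^ 2 =
      ‖x - ((ℝ ∙ v)ᗮ.orthogonalProjectionOnto w : E)‖ ^ 2 +
        (t - ⟪v, w⟫_ℝ / ‖v‖ ^ 2) ^ 2 * ‖v‖ ^ 2 := by
  set P : E := (ℝ ∙ v)ᗮ.orthogonalProjectionOnto w with hP
  have hsplit : x + t • v - w = (x - P) + (t - ⟪v, w⟫_ℝ / ‖v‖ ^ 2) • v := by
    rw [hP, coe_orthogonalProjectionOnto_orthogonal_span_singleton, sub_smul]
    abel
  have hperp : ⟪x - P, (t - ⟪v, w⟫_ℝ / ‖v‖ ^ 2) • v⟫_ℝ = 0 :=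
    (Submodule.mem_orthogonal' _ _).1 (Submodule.sub_mem _ hx (Subtype.prop _)) _
      (Submodule.smul_mem _ _ (Submodule.mem_span_singleton_self v))
  rw [hsplit, norm_add_sq_real, hperp, norm_smul, mul_pow, Real.norm_eq_abs, sq_abs]
  ring

lemma one_div_four_mul_le_sq_mul (m : ℤ) {k : ℝ} (hk : 0 ≤ k) :
    1 / (4 * k) ≤ (1 / (2 * k) - m / k) ^ 2 * k := by
  rcases hk.eq_or_lt with rfl | hk
  · simp
  have hodd : (1 : ℝ) ≤ (1 - 2 * m) ^ 2 := by
    have : (1 : ℤ) ≤ (1 - 2 * m) ^ 2 :=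
      (one_le_sq_iff_one_le_abs _).2 (Int.one_le_abs (by omega))
    exact_mod_cast this
  calc 1 / (4 * k) ≤ (1 - 2 * m) ^ 2 / (4 * k) := by gcongr
    _ = (1 / (2 * k) - m / k) ^ 2 * k := by field_simp; ring

theorem exists_dist_orthogonalProjectionOnto_le {L : Set E} {v : E}
    (hint : ∀ w ∈ L, ∃ m : ℤ, ⟪v, w⟫_ℝ = m) {ρ : ℝ} (hcov : ∀ x : E, ∃ w ∈ L, dist x w ≤ ρ)
    {x : E} (hx : x ∈ (ℝ ∙ v)ᗮ) :
    ∃ y ∈ L, dist x ((ℝ ∙ v)ᗮ.orthogonalProjectionOnto y : E) ≤ √(ρ ^ 2 - 1 / (4 * ‖v‖ ^ 2)) := by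
  obtain ⟨w, hw, hdist⟩ := hcov (x + (1 / (2 * ‖v‖ ^ 2)) • v)
  obtain ⟨m, hm⟩ := hint w hw
  refine ⟨w, hw, Real.le_sqrt_of_sq_le ?_⟩
  have hpyth := norm_add_smul_sub_sq_of_mem_orthogonal hx (1 / (2 * ‖v‖ ^ 2)) w
  rw [hm] at hpyth
  have hsq : ‖x + (1 / (2 * ‖v‖ ^ 2)) • v - w‖ ^ 2 ≤ ρ ^ 2 := by
    rw [← dist_eq_norm]
    exact pow_le_pow_left₀ dist_nonneg hdist 2
  rw [dist_eq_norm]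
  linarith [one_div_four_mul_le_sq_mul m (sq_nonneg ‖v‖)]

theorem stmt_4_general (n : ℕ)
    (L : AddSubgroup (EuclideanSpace ℝ (Fin n)))
    (hselfdual : (L : Set (EuclideanSpace ℝ (Fin n))) =
      {x | ∀ y ∈ L, ∃ m : ℤ, ⟪x, y⟫_ℝ = (m : ℝ)})
    (v : EuclideanSpace ℝ (Fin n)) (hv : v ∈ L)
    (ρ : ℝ)
    (hcov : ∀ x : EuclideanSpace ℝ (Fin n), ∃ w ∈ L, dist x w ≤ ρ) :
    ∀ x ∈ (ℝ ∙ v)ᗮ, ∃ y ∈ L,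
      dist x ((Submodule.orthogonalProjectionOnto ((ℝ ∙ v)ᗮ) y : (ℝ ∙ v)ᗮ) : EuclideanSpace ℝ (Fin n))
        ≤ Real.sqrt (ρ ^ 2 - 1 / (4 * ⟪v, v⟫_ℝ)) := by
  intro x hx
  have hint : ∀ w ∈ L, ∃ m : ℤ, ⟪v, w⟫_ℝ = m := by
    rw [← SetLike.mem_coe, hselfdual] at hv
    exact hv
  rw [real_inner_self_eq_norm_sq]
  exact exists_dist_orthogonalProjectionOnto_le hint hcov hx

/-- If `L` is a self-dual lattice with covering radius `ρ` and `v ∈ L` is primitive,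
then the covering radius of `L(v)* = p_v(L)` (inside the hyperplane `v^⊥`) is at
most `√(ρ² - 1/(4‖v‖²))`. -/
theorem stmt_4 (n : ℕ) (b : Module.Basis (Fin n) ℝ (EuclideanSpace ℝ (Fin n)))
    (L : AddSubgroup (EuclideanSpace ℝ (Fin n)))
    (hL : (L : Set (EuclideanSpace ℝ (Fin n))) = ↑(Submodule.span ℤ (Set.range ⇑b)))
    (hselfdual : (L : Set (EuclideanSpace ℝ (Fin n))) =
      {x | ∀ y ∈ L, ∃ m : ℤ, ⟪x, y⟫_ℝ = (m : ℝ)})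
    (v : EuclideanSpace ℝ (Fin n)) (hv : v ∈ L) (hv0 : v ≠ 0)
    (hprim : ∀ d : ℕ, 1 < d → ∀ w ∈ L, (d : ℝ) • w ≠ v)
    (ρ : ℝ) (hρ : ρ = sInf {μ : ℝ | ∀ x : EuclideanSpace ℝ (Fin n), ∃ w ∈ L, dist x w ≤ μ})
    (hcov : ∀ x : EuclideanSpace ℝ (Fin n), ∃ w ∈ L, dist x w ≤ ρ) :
    ∀ x ∈ (ℝ ∙ v)ᗮ, ∃ y ∈ L,
      dist x ((Submodule.orthogonalProjectionOnto ((ℝ ∙ v)ᗮ) y : (ℝ ∙ v)ᗮ) : EuclideanSpace ℝ (Fin n))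
        ≤ Real.sqrt (ρ ^ 2 - 1 / (4 * ⟪v, v⟫_ℝ)) :=
  stmt_4_general n L hselfdual v hv ρ hcov
end

section
/- Let D be a Delaunay polytope of an n-dimensional lattice L with circumcenter c. If 2c ∈ L + v for some vertex v of D (i.e. the circumcenter has denominator 2 in L relative to the vertices), then D is centrally symmetric with respect to c: for every vertex w of D, 2c − w is also a vertex of D. -/
theorem dist_two_smul_sub {E : Type*} [SeminormedAddCommGroup E] [Module ℝ E] (c w : E) :
    dist c ((2 : ℝ) • c - w) = dist c w := by
  rw [dist_eq_norm, dist_eq_norm, ← norm_neg]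
  congr 1
  module

theorem two_smul_sub_mem_sphere_inter {E : Type*} [SeminormedAddCommGroup E] [Module ℝ E]
    (L : AddSubgroup E) {c : E} {r : ℝ} (hc : (2 : ℝ) • c ∈ L) {w : E}
    (hw : w ∈ {y | y ∈ L ∧ dist c y = r}) :
    (2 : ℝ) • c - w ∈ {y | y ∈ L ∧ dist c y = r} :=
  ⟨L.sub_mem hc hw.1, (dist_two_smul_sub c w).trans hw.2⟩

theorem stmt_8_general (n : ℕ)
    (L : AddSubgroup (EuclideanSpace ℝ (Fin n)))
    (c : EuclideanSpace ℝ (Fin n)) (r : ℝ)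
    (vert : Set (EuclideanSpace ℝ (Fin n)))
    (hvert : vert = {y | y ∈ L ∧ dist c y = r})
    (v : EuclideanSpace ℝ (Fin n)) (hv : v ∈ vert)
    (h2c : ∃ u ∈ L, (2 : ℝ) • c = u + v) :
    ∀ w ∈ vert, (2 : ℝ) • c - w ∈ vert := by
  subst hvert
  obtain ⟨u, hu, h2c⟩ := h2c
  have hc : (2 : ℝ) • c ∈ L := h2c ▸ L.add_mem hu hv.1
  exact fun w hw ↦ two_smul_sub_mem_sphere_inter L hc hw

/-- If `D` is a Delaunay polytope of a lattice `L` with circumcenter `c`,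
and `2c ∈ L + v` for some vertex `v` of `D`, then `D` is centrally symmetric
with respect to `c`: for every vertex `w`, `2c − w` is again a vertex. -/
theorem stmt_8 (n : ℕ) (b : Module.Basis (Fin n) ℝ (EuclideanSpace ℝ (Fin n)))
    (L : AddSubgroup (EuclideanSpace ℝ (Fin n)))
    (hL : (L : Set (EuclideanSpace ℝ (Fin n))) = ↑(Submodule.span ℤ (Set.range ⇑b)))
    (c : EuclideanSpace ℝ (Fin n)) (r : ℝ)
    (hempty : ∀ y ∈ L, r ≤ dist c y)
    (vert : Set (EuclideanSpace ℝ (Fin n)))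
    (hvert : vert = {y | y ∈ L ∧ dist c y = r})
    (v : EuclideanSpace ℝ (Fin n)) (hv : v ∈ vert)
    (h2c : ∃ u ∈ L, (2 : ℝ) • c = u + v) :
    ∀ w ∈ vert, (2 : ℝ) • c - w ∈ vert :=
  stmt_8_general n L c r vert hvert v hv h2c
end

section
/- Every Delaunay polytope D of a lattice L is either centrally symmetric with respect to its circumcenter c, or antisymmetric, i.e. for every vertex v of D the point 2c − v is not a vertex of D. Moreover, den(c(D)) = 2 (with respect to the lattice of differences of vertices, translated to a vertex) if and only if D is centrally symmetric. -/
open scoped InnerProductSpace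

/-- Every Delaunay polytope `D` of a lattice `L` is either centrally symmetric
with respect to its circumcenter `c` or antisymmetric (no vertex reflects to a
vertex).  Moreover, the denominator of `c` (relative to the lattice of
differences of vertices, translated to a vertex `v₀`) is `2` if and only if `D`
is centrally symmetric. -/
theorem stmt_9 (n : ℕ) (b : Module.Basis (Fin n) ℝ (EuclideanSpace ℝ (Fin n)))
    (L : AddSubgroup (EuclideanSpace ℝ (Fin n)))
    (hL : (L : Set (EuclideanSpace ℝ (Fin n))) = ↑(Submodule.span ℤ (Set.range ⇑b)))
    (c : EuclideanSpace ℝ (Fin n)) (r : ℝ) (hr : 0 < r)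
    (hempty : ∀ y ∈ L, r ≤ dist c y)
    (vert : Set (EuclideanSpace ℝ (Fin n)))
    (hvert : vert = {y | y ∈ L ∧ dist c y = r})
    (v₀ : EuclideanSpace ℝ (Fin n)) (hv₀ : v₀ ∈ vert)
    (Ldiff : AddSubgroup (EuclideanSpace ℝ (Fin n)))
    (hLdiff : Ldiff = AddSubgroup.closure {x | ∃ u ∈ vert, ∃ w ∈ vert, x = u - w}) :
    ((∀ w ∈ vert, (2 : ℝ) • c - w ∈ vert) ∨ (∀ w ∈ vert, (2 : ℝ) • c - w ∉ vert)) ∧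
      (IsLeast {d : ℕ | 0 < d ∧ (d : ℝ) • (c - v₀) ∈ Ldiff} 2 ↔
        (∀ w ∈ vert, (2 : ℝ) • c - w ∈ vert)) := by
  have memL : ∀ u ∈ vert, u ∈ L := fun u hu => (hvert ▸ hu).1
  have memd : ∀ u ∈ vert, dist c u = r := fun u hu => (hvert ▸ hu).2
  have hvmem : ∀ u, u ∈ L → dist c u = r → u ∈ vert := fun u h1 h2 => hvert ▸ ⟨h1, h2⟩
  have hLd : ∀ x ∈ Ldiff, x ∈ L := by
    rw [hLdiff]
    intro x hx
    refine (AddSubgroup.closure_le L).2 ?_ hx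
    rintro y ⟨u, hu, w, hw, rfl⟩
    exact sub_mem (memL u hu) (memL w hw)
  have hdist : ∀ u, dist c ((2:ℝ) • c - u) = dist c u := by
    intro u
    rw [dist_eq_norm, dist_comm c u, dist_eq_norm]
    have : c - ((2:ℝ) • c - u) = u - c := by module
    rw [this]
  have hcL : c ∉ L := by
    intro hc
    have := hempty c hc
    simp only [dist_self] at this
    linarith
  have key : (∃ w ∈ vert, (2:ℝ) • c - w ∈ vert) → ∀ u ∈ vert, (2:ℝ) • c - u ∈ vert := by
    rintro ⟨w, hw, hw'⟩ u hu
    apply hvmem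
    · have h : (2:ℝ) • c - u = w + ((2:ℝ) • c - w) - u := by module
      rw [h]
      exact sub_mem (add_mem (memL w hw) (memL _ hw')) (memL u hu)
    · rw [hdist]; exact memd u hu
  constructor
  · by_cases h : ∃ w ∈ vert, (2:ℝ) • c - w ∈ vert
    · exact Or.inl (key h)
    · push_neg at h
      exact Or.inr h
  · constructor
    · rintro ⟨⟨-, h2⟩, -⟩
      apply key
      refine ⟨v₀, hv₀, hvmem _ ?_ ?_⟩
      · have h : (2:ℝ) • c - v₀ = ((2:ℕ):ℝ) • (c - v₀) + v₀ := by
          push_cast; module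
        rw [h]
        exact add_mem (hLd _ h2) (memL v₀ hv₀)
      · rw [hdist]; exact memd v₀ hv₀
    · intro hsym
      constructor
      · refine ⟨by norm_num, ?_⟩
        have h : ((2:ℕ):ℝ) • (c - v₀) = ((2:ℝ) • c - v₀) - v₀ := by
          push_cast; module
        rw [h, hLdiff]
        exact AddSubgroup.subset_closure ⟨_, hsym v₀ hv₀, v₀, hv₀, rfl⟩
      · rintro d ⟨hd0, hdmem⟩
        by_contra hlt
        interval_cases d
        have : c - v₀ ∈ L := by
          have h : c - v₀ = ((1:ℕ):ℝ) • (c - v₀) := by push_cast; module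
          rw [h]; exact hLd _ hdmem
        exact hcL (by simpa using add_mem this (memL v₀ hv₀))
end

section
/- Let P be an n-dimensional polytope whose vertex set lies in a lattice L, and let S = {v_1, ..., v_{n+1}} be a set of n+1 affinely independent vertices of P. Then every 2-lamination of P (a partition of vert P into two nonempty parts lying in two parallel consecutive lattice hyperplanes) is determined by its intersection with S; in particular P admits at most 2^{n+1} − 2 distinct 2-laminations. -/
/-!
An affine functional is determined by its values on `n + 1` affinely independent points of an
`n`-dimensional space. On a 2-lamination `f` only takes the values `k` and `k + 1`, and which one
it takes at a point of `S` is recorded by the trace of the lamination on `S`; so the trace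
determines `f` up to an additive constant, and hence the lamination. The trace is neither empty
nor all of `S`, since otherwise `f` would be constant on `S`, hence everywhere, and one of the two
parts would be empty.
-/

open Set

section LevelSplit

variable {k W P : Type*} [Ring k] [AddCommGroup W] [Module k W] [AddTorsor W P]

def IsLevelSplit (V : Set P) (f : P →ᵃ[k] k) (c : k) (p : Set P × Set P) : Prop :=
  p.1 = {x ∈ V | f x = c} ∧ p.2 = {x ∈ V | f x = c + 1} ∧ p.1 ∪ p.2 = V

namespace IsLevelSplit

variable {V : Set P} {f : P →ᵃ[k] k} {c : k} {p : Set P × Set P}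

theorem apply_eq_of_mem_fst (h : IsLevelSplit V f c p) {x : P} (hx : x ∈ p.1) : f x = c := by
  rw [h.1] at hx
  exact hx.2

theorem apply_eq_of_notMem_fst (h : IsLevelSplit V f c p) {x : P} (hxV : x ∈ V)
    (hx : x ∉ p.1) : f x = c + 1 := by
  have hx2 : x ∈ p.2 := (h.2.2 ▸ hxV).resolve_left hx
  rw [h.2.1] at hx2
  exact hx2.2

variable {ι : Type*} {S : ι → P}

theorem eq_of_trace_eq (hspan : affineSpan k (range S) = ⊤) (hS : ∀ i, S i ∈ V)
    (hp : IsLevelSplit V f c p) {g : P →ᵃ[k] k} {d : k} {q : Set P × Set P}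
    (hq : IsLevelSplit V g d q) (htr : {i | S i ∈ p.1} = {i | S i ∈ q.1}) : p = q := by
  have hfg : ∀ x, f x - c = g x - d := by
    suffices f - AffineMap.const k P c = g - AffineMap.const k P d from
      fun x => congrArg (· x) this
    refine AffineMap.ext_on hspan ?_
    rintro _ ⟨i, rfl⟩
    have hi : S i ∈ p.1 ↔ S i ∈ q.1 := Set.ext_iff.1 htr i
    by_cases hpi : S i ∈ p.1
    · simp [hp.apply_eq_of_mem_fst hpi, hq.apply_eq_of_mem_fst (hi.1 hpi)]
    · simp [hp.apply_eq_of_notMem_fst (hS i) hpi,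
        hq.apply_eq_of_notMem_fst (hS i) (hpi ∘ hi.2)]
  obtain ⟨hp1, hp2, -⟩ := hp
  obtain ⟨hq1, hq2, -⟩ := hq
  ext x
  · simp only [hp1, hq1, mem_ofPred_eq, ← sub_eq_zero (a := f x), ← sub_eq_zero (a := g x),
      hfg x]
  · simp only [hp2, hq2, mem_ofPred_eq, ← sub_eq_iff_eq_add', hfg x]

variable [Nontrivial k]

theorem trace_nonempty (hspan : affineSpan k (range S) = ⊤) (hS : ∀ i, S i ∈ V)
    (hp : IsLevelSplit V f c p) (hne : p.1.Nonempty) : {i | S i ∈ p.1}.Nonempty := by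
  by_contra! hempty
  have hconst : f = AffineMap.const k P (c + 1) := by
    refine AffineMap.ext_on hspan ?_
    rintro _ ⟨i, rfl⟩
    exact hp.apply_eq_of_notMem_fst (hS i) (Set.eq_empty_iff_forall_notMem.1 hempty i)
  obtain ⟨x, hx⟩ := hne
  simpa [hconst] using hp.apply_eq_of_mem_fst hx

theorem trace_ne_univ (hspan : affineSpan k (range S) = ⊤)
    (hp : IsLevelSplit V f c p) (hne : p.2.Nonempty) : {i | S i ∈ p.1} ≠ univ := by
  intro huniv
  have hconst : f = AffineMap.const k P c := by
    refine AffineMap.ext_on hspan ?_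
    rintro _ ⟨i, rfl⟩
    exact hp.apply_eq_of_mem_fst (Set.eq_univ_iff_forall.1 huniv i)
  obtain ⟨x, hx⟩ := hne
  rw [hp.2.1] at hx
  simpa [hconst] using hx.2

end IsLevelSplit

end LevelSplit

theorem Set.ncard_setOf_nonempty_ne_univ (ι : Type*) [Fintype ι] [Nonempty ι] :
    {A : Set ι | A.Nonempty ∧ A ≠ univ}.ncard = 2 ^ Fintype.card ι - 2 := by
  have hcompl : {A : Set ι | A.Nonempty ∧ A ≠ univ} = {∅, univ}ᶜ := by
    ext A
    simp [nonempty_iff_ne_empty]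
  rw [hcompl, ncard_compl, ncard_pair empty_ne_univ, Nat.card_eq_fintype_card,
    Fintype.card_set]

theorem stmt_10_general (n : ℕ)
    (L : Set (EuclideanSpace ℝ (Fin n)))
    (V : Set (EuclideanSpace ℝ (Fin n)))
    (S : Fin (n + 1) → EuclideanSpace ℝ (Fin n))
    (hS : ∀ i, S i ∈ V) (hAI : AffineIndependent ℝ S)
    (IsLam : Set (EuclideanSpace ℝ (Fin n)) × Set (EuclideanSpace ℝ (Fin n)) → Prop)
    (hIsLam : ∀ p, IsLam p ↔
      ∃ (f : EuclideanSpace ℝ (Fin n) →ᵃ[ℝ] ℝ) (k : ℤ),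
        (∀ y ∈ L, ∃ m : ℤ, f y = (m : ℝ)) ∧
        (∀ m : ℤ, ∃ y ∈ L, f y = (m : ℝ)) ∧
        p.1 = {x ∈ V | f x = (k : ℝ)} ∧
        p.2 = {x ∈ V | f x = (k : ℝ) + 1} ∧
        p.1 ∪ p.2 = V ∧ p.1.Nonempty ∧ p.2.Nonempty) :
    Set.InjOn (fun p : Set (EuclideanSpace ℝ (Fin n)) × Set (EuclideanSpace ℝ (Fin n)) =>
        {i : Fin (n + 1) | S i ∈ p.1}) {p | IsLam p} ∧
      Nat.card {p // IsLam p} ≤ 2 ^ (n + 1) - 2 := by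
  have hspan : affineSpan ℝ (range S) = ⊤ := by
    rw [hAI.affineSpan_eq_top_iff_card_eq_finrank_add_one]
    simp
  have hsplit : ∀ p, IsLam p →
      ∃ (f : EuclideanSpace ℝ (Fin n) →ᵃ[ℝ] ℝ) (c : ℝ),
        IsLevelSplit V f c p ∧ p.1.Nonempty ∧ p.2.Nonempty := by
    intro p hp
    obtain ⟨f, k, -, -, h1, h2, hunion, hne1, hne2⟩ := (hIsLam p).1 hp
    exact ⟨f, k, ⟨h1, h2, hunion⟩, hne1, hne2⟩
  have hinj : InjOn (fun p : Set (EuclideanSpace ℝ (Fin n)) × Set (EuclideanSpace ℝ (Fin n)) =>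
      {i : Fin (n + 1) | S i ∈ p.1}) {p | IsLam p} := by
    intro p hp q hq htr
    obtain ⟨f, c, hpf, -⟩ := hsplit p hp
    obtain ⟨g, d, hqg, -⟩ := hsplit q hq
    exact hpf.eq_of_trace_eq hspan hS hqg htr
  refine ⟨hinj, ?_⟩
  calc Nat.card {p // IsLam p} = {p | IsLam p}.ncard := Nat.card_coe_set_eq _
    _ ≤ {A : Set (Fin (n + 1)) | A.Nonempty ∧ A ≠ univ}.ncard := by
      refine ncard_le_ncard_of_injOn _ (fun p hp => ?_) hinj
      obtain ⟨f, c, hpf, hne1, hne2⟩ := hsplit p hp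
      exact ⟨hpf.trace_nonempty hspan hS hne1, hpf.trace_ne_univ hspan hne2⟩
    _ = 2 ^ (n + 1) - 2 := by
      rw [ncard_setOf_nonempty_ne_univ, Fintype.card_fin]

/-- A 2-lamination of a lattice polytope `P` (a partition of its vertex set into
two nonempty parts lying in two consecutive lattice hyperplanes) is determined
by its intersection with a set `S` of `n+1` affinely independent vertices; in
particular there are at most `2^(n+1) − 2` distinct 2-laminations. -/
theorem stmt_10 (n : ℕ) (b : Module.Basis (Fin n) ℝ (EuclideanSpace ℝ (Fin n)))
    (L : Set (EuclideanSpace ℝ (Fin n)))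
    (hL : L = ↑(Submodule.span ℤ (Set.range ⇑b)))
    (V : Set (EuclideanSpace ℝ (Fin n))) (hVL : V ⊆ L)
    (S : Fin (n + 1) → EuclideanSpace ℝ (Fin n))
    (hS : ∀ i, S i ∈ V) (hAI : AffineIndependent ℝ S)
    (IsLam : Set (EuclideanSpace ℝ (Fin n)) × Set (EuclideanSpace ℝ (Fin n)) → Prop)
    (hIsLam : ∀ p, IsLam p ↔
      ∃ (f : EuclideanSpace ℝ (Fin n) →ᵃ[ℝ] ℝ) (k : ℤ),
        (∀ y ∈ L, ∃ m : ℤ, f y = (m : ℝ)) ∧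
        (∀ m : ℤ, ∃ y ∈ L, f y = (m : ℝ)) ∧
        p.1 = {x ∈ V | f x = (k : ℝ)} ∧
        p.2 = {x ∈ V | f x = (k : ℝ) + 1} ∧
        p.1 ∪ p.2 = V ∧ p.1.Nonempty ∧ p.2.Nonempty) :
    Set.InjOn (fun p : Set (EuclideanSpace ℝ (Fin n)) × Set (EuclideanSpace ℝ (Fin n)) =>
        {i : Fin (n + 1) | S i ∈ p.1}) {p | IsLam p} ∧
      Nat.card {p // IsLam p} ≤ 2 ^ (n + 1) - 2 :=
  stmt_10_general n L V S hS hAI IsLam hIsLam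
end

section
/- Let D be a Delaunay polytope of an n-dimensional lattice L with circumcenter c, and for i ∈ Z let r_i be the distance from (1−2i)c to the nearest lattice point of L. If den(c) = 2 or den(c) = 4, then r_i ≥ r_0 for all i ∈ Z (D is of the first type). -/
/-!
Since `4 • c ∈ L` and `1 - 2i ≡ ±1 (mod 4)`, the point `(1 - 2i) • c` is congruent to `±c`
modulo `L`. The distance to `L` is the quotient norm on `E ⧸ L`, which is invariant under
negation, so `r_i = infDist c L`, and `r₀ ≤ infDist c L` is the empty-sphere property.
-/

theorem Odd.zsmul_eq_self_or_neg_of_four_zsmul_eq_zero {G : Type*} [AddCommGroup G] {x : G}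
    (hx : (4 : ℤ) • x = 0) {m : ℤ} (hm : Odd m) : m • x = x ∨ m • x = -x := by
  obtain ⟨k, rfl⟩ := hm
  rcases Int.even_or_odd k with ⟨j, rfl⟩ | ⟨j, rfl⟩
  · left
    calc (2 * (j + j) + 1) • x = j • (4 : ℤ) • x + x := by
          rw [smul_smul, add_smul, one_smul]; ring_nf
      _ = x := by rw [hx, smul_zero, zero_add]
  · right
    calc (2 * (2 * j + 1) + 1) • x = (j + 1) • (4 : ℤ) • x - x := by
          rw [smul_smul, sub_eq_add_neg, ← neg_one_smul ℤ x, ← add_smul]; ring_nf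
      _ = -x := by rw [hx, smul_zero, zero_sub]

open Metric in
theorem le_infDist_odd_zsmul_of_four_zsmul_mem {E : Type*} [SeminormedAddCommGroup E]
    {L : AddSubgroup E} {c : E} {r : ℝ} (hr : ∀ y ∈ L, r ≤ dist c y) (hc : (4 : ℤ) • c ∈ L)
    {m : ℤ} (hm : Odd m) : r ≤ infDist (m • c) L := by
  have hc' : (4 : ℤ) • (c : E ⧸ L) = 0 := by
    rwa [← QuotientAddGroup.mk_zsmul, QuotientAddGroup.eq_zero_iff]
  have hr' : r ≤ ‖(c : E ⧸ L)‖ := by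
    rwa [QuotientAddGroup.norm_mk, le_infDist ⟨0, L.zero_mem⟩]
  rw [← QuotientAddGroup.norm_mk, QuotientAddGroup.mk_zsmul]
  rcases hm.zsmul_eq_self_or_neg_of_four_zsmul_eq_zero hc' with h | h
  · rwa [h]
  · rwa [h, norm_neg]

theorem stmt_11_general (n : ℕ)
    (L : AddSubgroup (EuclideanSpace ℝ (Fin n)))
    (c : EuclideanSpace ℝ (Fin n)) (r₀ : ℝ)
    (hempty : ∀ y ∈ L, r₀ ≤ dist c y)
    (d : ℕ) (hden : IsLeast {d : ℕ | 0 < d ∧ (d : ℝ) • c ∈ L} d)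
    (hd : d = 2 ∨ d = 4) :
    ∀ i : ℤ, r₀ ≤ Metric.infDist (((1 - 2 * i : ℤ) : ℝ) • c)
      (L : Set (EuclideanSpace ℝ (Fin n))) := by
  intro i
  have hdc : (d : ℤ) • c ∈ L := by
    rw [← Int.cast_smul_eq_zsmul ℝ]; exact_mod_cast hden.1.2
  have h4c : (4 : ℤ) • c ∈ L := by
    obtain ⟨k, hk⟩ : (d : ℤ) ∣ 4 := by rcases hd with rfl | rfl <;> norm_num
    rw [hk, mul_comm, mul_smul]
    exact L.zsmul_mem hdc k
  have hodd : Odd (1 - 2 * i) := ⟨-i, by ring⟩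
  rw [Int.cast_smul_eq_zsmul]
  exact le_infDist_odd_zsmul_of_four_zsmul_mem hempty h4c hodd

/-- If `D` is a Delaunay polytope of a lattice `L` with circumcenter `c` (a
vertex translated to the origin) and the denominator of `c` is `2` or `4`, then
for every `i ∈ ℤ` the distance `r_i` from `(1−2i)c` to `L` is at least the
circumradius `r₀ = infDist c L`:  `D` is of the first type. -/
theorem stmt_11 (n : ℕ) (b : Module.Basis (Fin n) ℝ (EuclideanSpace ℝ (Fin n)))
    (L : AddSubgroup (EuclideanSpace ℝ (Fin n)))
    (hL : (L : Set (EuclideanSpace ℝ (Fin n))) = ↑(Submodule.span ℤ (Set.range ⇑b)))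
    (c : EuclideanSpace ℝ (Fin n)) (r₀ : ℝ)
    (hempty : ∀ y ∈ L, r₀ ≤ dist c y)
    (h0vert : (0 : EuclideanSpace ℝ (Fin n)) ∈ L ∧ dist c (0 : EuclideanSpace ℝ (Fin n)) = r₀)
    (d : ℕ) (hden : IsLeast {d : ℕ | 0 < d ∧ (d : ℝ) • c ∈ L} d)
    (hd : d = 2 ∨ d = 4) :
    ∀ i : ℤ, r₀ ≤ Metric.infDist (((1 - 2 * i : ℤ) : ℝ) • c)
      (L : Set (EuclideanSpace ℝ (Fin n))) :=
  stmt_11_general n L c r₀ hempty d hden hd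
end

section
/- Let L be a lattice of rank n in R^{n+1} contained in a hyperplane H, let D be a Delaunay polytope of L with circumcenter c ∈ H, and let e ∈ R^{n+1} \ H. Then the vertex sets vert D and e − vert D lie on a common sphere centered at e/2 if and only if the vector 2c − e is orthogonal to H. -/
open scoped InnerProductSpace

/-!
A point `p` is equidistant from all points of a set `S` lying on a sphere with center `c`
iff it lies on every perpendicular bisector of two points of `S`; these all pass through `c`,
so this says that `p - c` is orthogonal to the vector span of `S`. Take `p = e/2` and
`S = vert`, whose vector span is `H` because its affine span `H` contains `0`. The set
`e - vert` is the point reflection of `vert` through `e/2`, so it adds no condition, and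
`e/2 - c = -(2c - e)/2`.
-/

section EuclideanGeometry

open EuclideanGeometry AffineSubspace

variable {V P : Type*} [NormedAddCommGroup V] [InnerProductSpace ℝ V] [MetricSpace P]
  [NormedAddTorsor V P]

theorem dist_eq_dist_iff_inner_vsub_eq_zero {a b c p : P} (hc : dist a c = dist b c) :
    dist a p = dist b p ↔ ⟪p -ᵥ c, b -ᵥ a⟫_ℝ = 0 := by
  rw [← mem_perpBisector_iff_dist_eq', ← Submodule.mem_orthogonal_singleton_iff_inner_left,
    ← direction_perpBisector,
    vsub_right_mem_direction_iff_mem (mem_perpBisector_iff_dist_eq'.mpr hc)]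

theorem exists_forall_dist_eq_iff_forall_inner_eq_zero {S : Set P} {c p : P} {r : ℝ}
    (hS : S ⊆ Metric.sphere c r) :
    (∃ ρ : ℝ, ∀ w ∈ S, dist w p = ρ) ↔ ∀ v ∈ vectorSpan ℝ S, ⟪p -ᵥ c, v⟫_ℝ = 0 := by
  have hdist : ∀ a ∈ S, ∀ b ∈ S, dist a c = dist b c := fun a ha b hb => by
    rw [Metric.mem_sphere.mp (hS ha), Metric.mem_sphere.mp (hS hb)]
  constructor
  · rintro ⟨ρ, hρ⟩ v hv
    suffices vectorSpan ℝ S ≤ (ℝ ∙ (p -ᵥ c))ᗮ from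
      Submodule.mem_orthogonal_singleton_iff_inner_right.mp (this hv)
    rw [vectorSpan_def, Submodule.span_le]
    rintro _ ⟨a, ha, b, hb, rfl⟩
    rw [SetLike.mem_coe, Submodule.mem_orthogonal_singleton_iff_inner_right,
      ← dist_eq_dist_iff_inner_vsub_eq_zero (hdist b hb a ha), hρ a ha, hρ b hb]
  · intro horth
    rcases S.eq_empty_or_nonempty with rfl | ⟨a, ha⟩
    · exact ⟨0, by simp⟩
    refine ⟨dist a p, fun w hw => ?_⟩
    rw [dist_eq_dist_iff_inner_vsub_eq_zero (hdist w hw a ha)]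
    exact horth _ (vsub_mem_vectorSpan ℝ ha hw)

end EuclideanGeometry

theorem vectorSpan_eq_of_coe_affineSpan_eq {k V : Type*} [Ring k] [AddCommGroup V] [Module k V]
    {s : Set V} {H : Submodule k V} (h : (affineSpan k s : Set V) = H) :
    vectorSpan k s = H := by
  rw [← direction_affineSpan, ← H.toAffineSubspace_direction]
  congr 1
  exact SetLike.coe_injective h

theorem dist_sub_half_smul_comm {E : Type*} [SeminormedAddCommGroup E] [NormedSpace ℝ E]
    (e w : E) : dist (e - w) ((1 / 2 : ℝ) • e) = dist w ((1 / 2 : ℝ) • e) := by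
  rw [dist_eq_norm, dist_eq_norm, ← norm_neg]
  congr 1
  module

theorem stmt_13_general (n : ℕ) (H : Submodule ℝ (EuclideanSpace ℝ (Fin (n + 1))))
    (L : AddSubgroup (EuclideanSpace ℝ (Fin (n + 1))))
    (c : EuclideanSpace ℝ (Fin (n + 1))) (r : ℝ)
    (vert : Set (EuclideanSpace ℝ (Fin (n + 1))))
    (hvert : vert = {y | y ∈ L ∧ dist c y = r})
    (hfull : (affineSpan ℝ vert : Set (EuclideanSpace ℝ (Fin (n + 1)))) = (H : Set _))
    (e : EuclideanSpace ℝ (Fin (n + 1))) :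
    (∃ ρ : ℝ, (∀ w ∈ vert, dist w ((1 / 2 : ℝ) • e) = ρ) ∧
        (∀ w ∈ vert, dist (e - w) ((1 / 2 : ℝ) • e) = ρ)) ↔
      ∀ h ∈ H, ⟪(2 : ℝ) • c - e, h⟫_ℝ = 0 := by
  have hsphere : vert ⊆ Metric.sphere c r := by
    rintro w hw
    rw [hvert] at hw
    rw [Metric.mem_sphere, dist_comm, hw.2]
  simp only [dist_sub_half_smul_comm, and_self]
  rw [exists_forall_dist_eq_iff_forall_inner_eq_zero hsphere,
    vectorSpan_eq_of_coe_affineSpan_eq hfull]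
  have hscale : (2 : ℝ) • c - e = (-2 : ℝ) • ((1 / 2 : ℝ) • e -ᵥ c) := by
    rw [vsub_eq_sub]
    module
  simp [hscale, real_inner_smul_left]

/-- Let `L` be a rank-`n` lattice inside a hyperplane `H ⊂ ℝ^{n+1}`, `D` a
(full-dimensional in `H`) Delaunay polytope of `L` with circumcenter `c ∈ H`,
and `e ∉ H`.  Then `vert D` and `e − vert D` lie on a common sphere centered at
`e/2` if and only if `2c − e` is orthogonal to `H`. -/
theorem stmt_13 (n : ℕ) (H : Submodule ℝ (EuclideanSpace ℝ (Fin (n + 1))))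
    (hH : Module.finrank ℝ H = n)
    (v : Fin n → EuclideanSpace ℝ (Fin (n + 1))) (hli : LinearIndependent ℝ v)
    (hvH : ∀ i, v i ∈ H)
    (L : AddSubgroup (EuclideanSpace ℝ (Fin (n + 1))))
    (hL : (L : Set (EuclideanSpace ℝ (Fin (n + 1)))) = ↑(Submodule.span ℤ (Set.range v)))
    (c : EuclideanSpace ℝ (Fin (n + 1))) (hc : c ∈ H) (r : ℝ) (hr : 0 < r)
    (hempty : ∀ y ∈ L, r ≤ dist c y)
    (vert : Set (EuclideanSpace ℝ (Fin (n + 1))))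
    (hvert : vert = {y | y ∈ L ∧ dist c y = r})
    (hfull : (affineSpan ℝ vert : Set (EuclideanSpace ℝ (Fin (n + 1)))) = (H : Set _))
    (e : EuclideanSpace ℝ (Fin (n + 1))) (he : e ∉ H) :
    (∃ ρ : ℝ, (∀ w ∈ vert, dist w ((1 / 2 : ℝ) • e) = ρ) ∧
        (∀ w ∈ vert, dist (e - w) ((1 / 2 : ℝ) • e) = ρ)) ↔
      ∀ h ∈ H, ⟪(2 : ℝ) • c - e, h⟫_ℝ = 0 :=
  stmt_13_general n H L c r vert hvert hfull e
end
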